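/- arXiv:2107.09520 — 2 statements merged into one kernel-verified Lean document; each statement's English description precedes it below -/
import Mathlib

section
/- Let E be a real Banach space and let J : E → ℝ be continuously Fréchet differentiable. Assume that J satisfies the Palais–Smale condition: every sequence (u_n) in E such that (J(u_n)) is bounded and J'(u_n) → 0 in the dual space E* has a convergent subsequence. Assume moreover: (i) J(0) = 0 and J(e) = 0 for some e ≠ 0 in E; (ii) there exist ρ ∈ (0, ‖e‖) and σ > 0 such that J(u) ≥ σ for all u with ‖u‖ = ρ. Let Γ := {h ∈ C([0,1], E) : h(0) = 0, h(1) = e} and c := inf_{h ∈ Γ} max_{t ∈ [0,1]} J(h(t)). Then c ≥ σ > 0 and c is a critical value of J: there exists u ∈ E with J(u) = c and J'(u) = 0. -/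
open Filter

/-- Ekeland-type variational principle with a sequential lower-semicontinuity hypothesis. -/
lemma ekeland_aux {X : Type*} [MetricSpace X] [CompleteSpace X]
    (Φ : X → ℝ) (m : ℝ) (hm : ∀ x, m ≤ Φ x)
    (hlsc : ∀ (u : ℕ → X) (x : X), Tendsto u atTop (nhds x) →
      ∀ (b : ℕ → ℝ) (B : ℝ), Tendsto b atTop (nhds B) → (∀ n, Φ (u n) ≤ b n) → Φ x ≤ B)
    (ε : ℝ) (hε : 0 < ε) (x₀ : X) :
    ∃ x, Φ x ≤ Φ x₀ ∧ ∀ y, Φ x ≤ Φ y + ε * dist x y := by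
  -- the "better point" relation
  set S : X → Set X := fun x => {z | Φ z + ε * dist x z ≤ Φ x} with hS
  have hxS : ∀ x, x ∈ S x := by
    intro x; show Φ x + ε * dist x x ≤ Φ x; simp
  have hex : ∀ (n : ℕ) (x : X), ∃ y, y ∈ S x ∧ ∀ z ∈ S x, Φ y ≤ Φ z + 1/(n+1) := by
    intro n x
    have hne : (Φ '' S x).Nonempty := ⟨Φ x, x, hxS x, rfl⟩
    have hbd : BddBelow (Φ '' S x) := ⟨m, by rintro _ ⟨z, _, rfl⟩; exact hm z⟩
    have hlt : sInf (Φ '' S x) < sInf (Φ '' S x) + 1/(n+1) := by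
      have : (0:ℝ) < 1/(n+1) := by positivity
      linarith
    obtain ⟨_, ⟨y, hy, rfl⟩, hy2⟩ := exists_lt_of_csInf_lt hne hlt
    refine ⟨y, hy, fun z hz => ?_⟩
    have := csInf_le hbd ⟨z, hz, rfl⟩
    linarith
  choose g hg1 hg2 using hex
  set u : ℕ → X := fun n => Nat.rec x₀ (fun n x => g n x) n with hu
  have hu0 : u 0 = x₀ := rfl
  have husucc : ∀ n, u (n+1) = g n (u n) := fun n => rfl
  have h1 : ∀ n, Φ (u (n+1)) + ε * dist (u n) (u (n+1)) ≤ Φ (u n) := by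
    intro n; rw [husucc]; exact hg1 n (u n)
  have h2 : ∀ n z, z ∈ S (u n) → Φ (u (n+1)) ≤ Φ z + 1/(n+1) := by
    intro n z hz; rw [husucc]; exact hg2 n (u n) z hz
  have hanti : Antitone (fun n => Φ (u n)) := by
    refine antitone_nat_of_succ_le fun n => ?_
    have := h1 n
    have : (0:ℝ) ≤ ε * dist (u n) (u (n+1)) := by positivity
    nlinarith [h1 n]
  -- key distance bound
  have key : ∀ n k, ε * dist (u n) (u (n+k)) ≤ Φ (u n) - Φ (u (n+k)) := by
    intro n k
    induction k with
    | zero => simp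
    | succ k ih =>
      have htri : dist (u n) (u (n+(k+1))) ≤ dist (u n) (u (n+k)) + dist (u (n+k)) (u (n+k+1)) := by
        exact dist_triangle (u n) (u (n+k)) (u (n+k+1))
      have := h1 (n+k)
      have hmul : ε * dist (u n) (u (n+(k+1))) ≤
          ε * dist (u n) (u (n+k)) + ε * dist (u (n+k)) (u (n+k+1)) := by
        rw [← mul_add]; exact mul_le_mul_of_nonneg_left htri hε.le
      have heq : Φ (u (n + (k+1))) = Φ (u (n+k+1)) := rfl
      nlinarith [h1 (n+k)]
  -- convergence of values
  have hbdd : BddBelow (Set.range fun n => Φ (u n)) := ⟨m, by rintro _ ⟨n, rfl⟩; exact hm _⟩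
  set L : ℝ := ⨅ n, Φ (u n) with hL
  have hΦtend : Tendsto (fun n => Φ (u n)) atTop (nhds L) := tendsto_atTop_ciInf hanti hbdd
  have hLle : ∀ n, L ≤ Φ (u n) := fun n => ciInf_le hbdd n
  -- Cauchy
  have hcauchy : CauchySeq u := by
    refine cauchySeq_of_le_tendsto_0 (fun N => (Φ (u N) - L)/ε) ?_ ?_
    · intro n m N hn hm'
      wlog hnm : n ≤ m generalizing n m
      · rw [dist_comm]; exact this m n hm' hn (le_of_not_ge hnm)
      obtain ⟨k, rfl⟩ := Nat.exists_eq_add_of_le hnm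
      have := key n k
      have h3 : Φ (u n) ≤ Φ (u N) := hanti hn
      have h4 : L ≤ Φ (u (n+k)) := hLle _
      rw [le_div_iff₀ hε]
      nlinarith
    · have : Tendsto (fun N => (Φ (u N) - L)/ε) atTop (nhds ((L - L)/ε)) :=
        ((hΦtend.sub tendsto_const_nhds).div_const ε)
      simpa using this
  obtain ⟨x, hx⟩ := cauchySeq_tendsto_of_complete hcauchy
  have hΦx : Φ x ≤ L := hlsc u x hx _ L hΦtend (fun n => le_refl _)
  refine ⟨x, le_trans hΦx (hLle 0), fun y => ?_⟩
  by_contra hcon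
  push_neg at hcon
  -- x ∈ S (u n) for each n
  have hxS' : ∀ n, Φ x + ε * dist (u n) x ≤ Φ (u n) := by
    intro n
    have hseq : Tendsto (fun k => u (n+k)) atTop (nhds x) := by
      simpa [Nat.add_comm, Function.comp_def] using hx.comp (tendsto_add_atTop_nat n)
    have hb : Tendsto (fun k => Φ (u n) - ε * dist (u n) (u (n+k))) atTop
        (nhds (Φ (u n) - ε * dist (u n) x)) :=
      tendsto_const_nhds.sub (tendsto_const_nhds.mul (tendsto_const_nhds.dist hseq))
    have := hlsc (fun k => u (n+k)) x hseq _ _ hb (fun k => by have := key n k; linarith)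
    linarith
  have hyS : ∀ n, y ∈ S (u n) := by
    intro n
    have hd : dist (u n) y ≤ dist (u n) x + dist x y := dist_triangle _ _ _
    have := hxS' n
    have hmul : ε * dist (u n) y ≤ ε * dist (u n) x + ε * dist x y := by
      rw [← mul_add]; exact mul_le_mul_of_nonneg_left hd hε.le
    show Φ y + ε * dist (u n) y ≤ Φ (u n)
    nlinarith
  have hLy : L ≤ Φ y := by
    have h5 : ∀ n : ℕ, L ≤ Φ y + 1/(n+1) := fun n => le_trans (hLle (n+1)) (h2 n y (hyS n))
    refine le_of_forall_pos_le_add fun δ hδ => ?_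
    obtain ⟨n, hn⟩ := exists_nat_one_div_lt hδ
    exact le_trans (h5 n) (by linarith [hn])
  have hd0 : (0:ℝ) ≤ ε * dist x y := by positivity
  linarith

open Metric Set

/-- The mountain pass value `c = inf_{h ∈ Γ} max_{t ∈ [0,1]} J(h(t))`, where
`Γ` is the set of continuous paths joining `0` to `e`. -/
noncomputable def mountainPassValue {E : Type*} [NormedAddCommGroup E] [NormedSpace ℝ E]
    (J : E → ℝ) (e : E) : ℝ :=
  sInf {y : ℝ | ∃ h : C(unitInterval, E), h 0 = 0 ∧ h 1 = e ∧ y = ⨆ t : unitInterval, J (h t)}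

set_option maxHeartbeats 2000000

/-- Mountain pass theorem of Ambrosetti–Rabinowitz. -/
theorem mountain_pass
    {E : Type*} [NormedAddCommGroup E] [NormedSpace ℝ E] [CompleteSpace E]
    (J : E → ℝ) (J' : E → E →L[ℝ] ℝ)
    (hdiff : ∀ x : E, HasFDerivAt J (J' x) x) (hcont : Continuous J')
    (hPS : ∀ u : ℕ → E, (∃ M : ℝ, ∀ k, |J (u k)| ≤ M) →
      Tendsto (fun k => J' (u k)) atTop (nhds 0) →
      ∃ φ : ℕ → ℕ, StrictMono φ ∧ ∃ x : E, Tendsto (fun k => u (φ k)) atTop (nhds x))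
    (e : E) (he : e ≠ 0) (hJ0 : J 0 = 0) (hJe : J e = 0)
    (ρ σ : ℝ) (hρ0 : 0 < ρ) (hρe : ρ < ‖e‖) (hσ : 0 < σ)
    (hmountain : ∀ u : E, ‖u‖ = ρ → σ ≤ J u) :
    σ ≤ mountainPassValue J e ∧
      ∃ u : E, J u = mountainPassValue J e ∧ J' u = 0 := by
  classical
  have hJc : Continuous J := continuous_iff_continuousAt.2 fun x => (hdiff x).continuousAt
  set c : ℝ := mountainPassValue J e with hc
  set Y : Set ℝ :=
    {y : ℝ | ∃ h : C(unitInterval, E), h 0 = 0 ∧ h 1 = e ∧ y = ⨆ t : unitInterval, J (h t)}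
    with hY
  -- boundedness of ranges
  have hbdd : ∀ h : C(unitInterval, E), BddAbove (Set.range fun t => J (h t)) := fun h =>
    (isCompact_range (hJc.comp h.continuous)).bddAbove
  -- every path crosses the sphere of radius ρ
  have hcross : ∀ h : C(unitInterval, E), h 0 = 0 → h 1 = e → ∃ t, ‖h t‖ = ρ := by
    intro h h0 h1
    have hf : Continuous fun t : unitInterval => ‖h t‖ := h.continuous.norm
    have : ρ ∈ Set.Icc ‖h (0:unitInterval)‖ ‖h (1:unitInterval)‖ := by
      rw [h0, h1]; simp [Set.mem_Icc]; constructor <;> [exact hρ0.le; exact hρe.le]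
    obtain ⟨t, ht⟩ := intermediate_value_univ (0:unitInterval) 1 hf this
    exact ⟨t, ht⟩
  have hσle : ∀ h : C(unitInterval, E), h 0 = 0 → h 1 = e →
      σ ≤ ⨆ t : unitInterval, J (h t) := by
    intro h h0 h1
    obtain ⟨t, ht⟩ := hcross h h0 h1
    exact le_trans (hmountain _ ht) (le_ciSup (hbdd h) t)
  -- the straight-line path
  have hYne : Y.Nonempty := by
    refine ⟨⨆ t : unitInterval, J ((⟨fun t => (t:ℝ) • e,
      (continuous_subtype_val.smul continuous_const)⟩ : C(unitInterval, E)) t),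
      ⟨fun t => (t:ℝ) • e, (continuous_subtype_val.smul continuous_const)⟩, ?_, ?_, rfl⟩
    · simp
    · simp
  have hYlb : ∀ y ∈ Y, σ ≤ y := by
    rintro y ⟨h, h0, h1, rfl⟩; exact hσle h h0 h1
  have hYbdd : BddBelow Y := ⟨σ, hYlb⟩
  have hσc : σ ≤ c := le_csInf hYne hYlb
  have hcle : ∀ h : C(unitInterval, E), h 0 = 0 → h 1 = e →
      c ≤ ⨆ t : unitInterval, J (h t) := fun h h0 h1 => csInf_le hYbdd ⟨h, h0, h1, rfl⟩
  -- main step: almost-critical points at level c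
  have hkey : ∀ ε : ℝ, 0 < ε → ∃ u : E, |J u - c| ≤ ε ∧ ‖J' u‖ ≤ ε := by
    intro ε hε
    by_contra hcon
    push_neg at hcon
    -- a uniform lower bound for ‖J'‖ near level c
    set ε₀ : ℝ := min ε (σ/2) with hε₀def
    have hε₀ : 0 < ε₀ := lt_min hε (by linarith)
    have hε₀σ : ε₀ ≤ σ/2 := min_le_right _ _
    have hε₀ε : ε₀ ≤ ε := min_le_left _ _
    have hcrit : ∀ u : E, |J u - c| ≤ ε₀ → ε₀ ≤ ‖J' u‖ := by
      intro u hu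
      have := hcon u (le_trans hu hε₀ε)
      linarith
    have hcε₀ : 2*ε₀ ≤ c := by linarith [hσc]
    -- the path space
    set Γ : Set C(unitInterval, E) := {h | h 0 = 0 ∧ h 1 = e} with hΓ
    have hΓclosed : IsClosed Γ := by
      have h1 : IsClosed {h : C(unitInterval, E) | h 0 = 0} :=
        isClosed_singleton.preimage (ContinuousEvalConst.continuous_eval_const (0:unitInterval))
      have h2 : IsClosed {h : C(unitInterval, E) | h 1 = e} :=
        isClosed_singleton.preimage (ContinuousEvalConst.continuous_eval_const (1:unitInterval))
      exact h1.inter h2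
    haveI : CompleteSpace Γ := hΓclosed.completeSpace_coe
    set Φ : Γ → ℝ := fun x => ⨆ t : unitInterval, J ((x : C(unitInterval, E)) t) with hΦ
    have hΦσ : ∀ x : Γ, σ ≤ Φ x := fun x => hσle _ x.2.1 x.2.2
    have hΦc : ∀ x : Γ, c ≤ Φ x := fun x => hcle _ x.2.1 x.2.2
    have hΦub : ∀ (x : Γ) (t : unitInterval), J ((x : C(unitInterval, E)) t) ≤ Φ x :=
      fun x t => le_ciSup (hbdd _) t
    have hlsc : ∀ (u : ℕ → Γ) (x : Γ), Tendsto u atTop (nhds x) →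
        ∀ (b : ℕ → ℝ) (B : ℝ), Tendsto b atTop (nhds B) → (∀ n, Φ (u n) ≤ b n) → Φ x ≤ B := by
      intro u x hu b B hb hub
      refine ciSup_le fun t => ?_
      have hev : Tendsto (fun n => ((u n : C(unitInterval, E))) t) atTop
          (nhds ((x : C(unitInterval, E)) t)) :=
        ((ContinuousEvalConst.continuous_eval_const t).tendsto _).comp
          ((continuous_subtype_val.tendsto x).comp hu)
      have hJev : Tendsto (fun n => J ((u n : C(unitInterval, E)) t)) atTop
          (nhds (J ((x : C(unitInterval, E)) t))) := (hJc.tendsto _).comp hev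
      exact le_of_tendsto_of_tendsto' hJev hb fun n => le_trans (hΦub (u n) t) (hub n)
    -- a path with value close to c
    obtain ⟨y₀, hy₀Y, hy₀lt⟩ := exists_lt_of_csInf_lt hYne
      (show c < c + ε₀/2 by linarith)
    obtain ⟨h₀, h₀0, h₀1, rfl⟩ := hy₀Y
    -- Ekeland
    obtain ⟨H, hH1, hH2⟩ := ekeland_aux Φ σ hΦσ hlsc (ε₀/4) (by positivity)
      (⟨h₀, h₀0, h₀1⟩ : Γ)
    set h : C(unitInterval, E) := (H : C(unitInterval, E)) with hh
    have hΦH : Φ H ≤ c + ε₀/2 := le_trans hH1 hy₀lt.le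
    have hcΦH : c ≤ Φ H := hΦc H
    -- the compact set and near-critical zone
    set K : Set E := Set.range fun t => h t with hK
    have hKcomp : IsCompact K := isCompact_range h.continuous
    have hJK : ∀ w ∈ K, J w ≤ Φ H := by rintro w ⟨t, rfl⟩; exact hΦub H t
    set N : Set E := K ∩ J ⁻¹' (Set.Ici (c - ε₀/2)) with hN
    have hNcomp : IsCompact N := hKcomp.inter_right (isClosed_Ici.preimage hJc)
    have hNclosed : IsClosed N := hNcomp.isClosed
    have hNne : N.Nonempty := by
      by_contra hne
      rw [Set.not_nonempty_iff_eq_empty] at hne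
      have : ∀ t : unitInterval, J (h t) ≤ c - ε₀/2 := by
        intro t
        by_contra hlt
        push_neg at hlt
        have hmem : h t ∈ N := by
          rw [hN]
          exact ⟨⟨t, rfl⟩, le_of_lt hlt⟩
        rw [hne] at hmem
        exact hmem
      have := ciSup_le this
      have : Φ H ≤ c - ε₀/2 := this
      linarith
    -- pseudo-gradient directions with radii
    have hvr : ∀ w, w ∈ N → ∃ v : E, ∃ r : ℝ, ‖v‖ ≤ 1 ∧ 0 < r ∧
        ∀ y ∈ Metric.ball w (2*r), ε₀/2 < J' y v := by
      rintro w ⟨hwK, hwJ⟩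
      -- ‖J' w‖ ≥ ε₀
      have habs : |J w - c| ≤ ε₀ := by
        rw [abs_le]
        constructor
        · have := hwJ; simp only [Set.mem_preimage, Set.mem_Ici] at this; linarith
        · have := hJK w hwK; linarith
      have hnorm : ε₀ ≤ ‖J' w‖ := hcrit w habs
      -- a direction with large derivative
      have hlt : ε₀ * (3/4) < ‖J' w‖ := by linarith
      obtain ⟨v₀, hv₀, hv₀lt⟩ := (J' w).exists_lt_apply_of_lt_opNorm hlt
      have hv₀' : ∃ v : E, ‖v‖ ≤ 1 ∧ ε₀ * (3/4) < J' w v := by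
        rcases le_or_gt 0 (J' w v₀) with hpos | hneg
        · refine ⟨v₀, hv₀.le, ?_⟩
          rwa [Real.norm_eq_abs, abs_of_nonneg hpos] at hv₀lt
        · refine ⟨-v₀, by rw [norm_neg]; exact hv₀.le, ?_⟩
          rw [map_neg]
          rwa [Real.norm_eq_abs, abs_of_neg hneg] at hv₀lt
      obtain ⟨vv, hvv1, hvv2⟩ := hv₀'
      -- continuity of J' gives a radius
      have hcontat : ∃ δ > 0, ∀ y, dist y w < δ → ‖J' y - J' w‖ < ε₀/4 := by
        have := Metric.continuous_iff.1 hcont w (ε₀/4) (by positivity)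
        obtain ⟨δ, hδ, hδ2⟩ := this
        exact ⟨δ, hδ, fun y hy => by
          have := hδ2 y hy; rwa [dist_eq_norm] at this⟩
      obtain ⟨δ, hδ, hδ2⟩ := hcontat
      refine ⟨vv, δ/2, hvv1, by positivity, fun y hy => ?_⟩
      rw [Metric.mem_ball] at hy
      have hy' : dist y w < δ := by linarith [hy, (by linarith : 2*(δ/2) = δ)]
      have hb := hδ2 y hy'
      have hdiff2 : |J' y vv - J' w vv| ≤ ‖J' y - J' w‖ := by
        have h1 : J' y vv - J' w vv = (J' y - J' w) vv := by
          simp [ContinuousLinearMap.sub_apply]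
        rw [h1, ← Real.norm_eq_abs]
        calc ‖(J' y - J' w) vv‖ ≤ ‖J' y - J' w‖ * ‖vv‖ := (J' y - J' w).le_opNorm vv
          _ ≤ ‖J' y - J' w‖ * 1 := by
              exact mul_le_mul_of_nonneg_left hvv1 (norm_nonneg _)
          _ = ‖J' y - J' w‖ := mul_one _
      have := abs_le.1 hdiff2
      have h4 : ε₀/2 = ε₀ * (3/4) - ε₀/4 := by ring
      linarith
    choose! v r hv hr hball using hvr
    -- finite subcover
    have hcover : N ⊆ ⋃ w ∈ N, Metric.ball w (r w) := fun w hw =>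
      Set.mem_biUnion hw (Metric.mem_ball_self (hr w hw))
    obtain ⟨T, hTN, hTfin, hTcover⟩ :=
      hNcomp.elim_finite_subcover_image (fun w _ => Metric.isOpen_ball) hcover
    set F : Finset E := hTfin.toFinset with hF
    have hFmem : ∀ i, i ∈ F ↔ i ∈ T := fun i => hTfin.mem_toFinset
    have hFN : ∀ i ∈ F, i ∈ N := fun i hi => hTN ((hFmem i).1 hi)
    have hFne : F.Nonempty := by
      obtain ⟨w, hw⟩ := hNne
      obtain ⟨i, hi, _⟩ := Set.mem_iUnion₂.1 (hTcover hw)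
      exact ⟨i, (hFmem i).2 hi⟩
    set rmin : ℝ := F.inf' hFne r with hrmin
    have hrmin0 : 0 < rmin := by
      rw [hrmin, Finset.lt_inf'_iff]
      exact fun i hi => hr i (hFN i hi)
    have hrminle : ∀ i ∈ F, rmin ≤ r i := fun i hi => Finset.inf'_le r hi
    -- partition of unity data
    set μ : E → E → ℝ := fun i w => max (r i - dist w i) 0 with hμ
    have hμcont : ∀ i, Continuous (μ i) :=
      fun i => (continuous_const.sub (continuous_id.dist continuous_const)).max continuous_const
    have hμ0 : ∀ i w, 0 ≤ μ i w := fun i w => le_max_right _ _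
    have hμpos : ∀ i w, 0 < μ i w → dist w i < r i := by
      intro i w hpos
      rw [hμ] at hpos
      simp only [lt_max_iff] at hpos
      rcases hpos with hp | hp
      · linarith
      · exact absurd hp (lt_irrefl 0)
    have hμmem : ∀ i w, w ∈ Metric.ball i (r i) → 0 < μ i w := by
      intro i w hw
      rw [Metric.mem_ball] at hw
      exact lt_max_of_lt_left (by linarith)
    set D : E → ℝ := fun w => Metric.infDist w N + ∑ i ∈ F, μ i w with hD
    have hDcont : Continuous D :=
      (Metric.continuous_infDist_pt N).add (continuous_finset_sum _ fun i _ => hμcont i)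
    have hsum0 : ∀ w, 0 ≤ ∑ i ∈ F, μ i w := fun w => Finset.sum_nonneg fun i _ => hμ0 i w
    have hDpos : ∀ w, 0 < D w := by
      intro w
      by_cases hwN : w ∈ N
      · obtain ⟨i, hi, hwi⟩ := Set.mem_iUnion₂.1 (hTcover hwN)
        have h1 : 0 < ∑ j ∈ F, μ j w :=
          Finset.sum_pos' (fun j _ => hμ0 j w) ⟨i, (hFmem i).2 hi, hμmem i w hwi⟩
        have h2 : 0 ≤ Metric.infDist w N := Metric.infDist_nonneg
        rw [hD]; positivity
      · have h1 : 0 < Metric.infDist w N :=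
          (hNclosed.notMem_iff_infDist_pos hNne).1 hwN
        have := hsum0 w
        rw [hD]; positivity
    set V : E → E := fun w => (D w)⁻¹ • ∑ i ∈ F, μ i w • v i with hV
    have hVcont : Continuous V :=
      (hDcont.inv₀ fun w => (hDpos w).ne').smul
        (continuous_finset_sum _ fun i _ => (hμcont i).smul continuous_const)
    have hVnorm : ∀ w, ‖V w‖ ≤ 1 := by
      intro w
      have h1 : ‖∑ i ∈ F, μ i w • v i‖ ≤ ∑ i ∈ F, μ i w := by
        refine le_trans (norm_sum_le _ _) (Finset.sum_le_sum fun i hi => ?_)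
        rw [norm_smul, Real.norm_eq_abs, abs_of_nonneg (hμ0 i w)]
        exact mul_le_of_le_one_right (hμ0 i w) (hv i (hFN i hi))
      have h2 : ∑ i ∈ F, μ i w ≤ D w := by
        rw [hD]; simp only
        linarith [Metric.infDist_nonneg (x := w) (s := N)]
      rw [hV]; simp only
      rw [norm_smul, Real.norm_eq_abs, abs_of_nonneg (inv_nonneg.2 (hDpos w).le)]
      rw [inv_mul_le_iff₀ (hDpos w), mul_one]
      exact le_trans h1 h2
    -- key derivative estimates
    have hsumle : ∀ w y, dist y w ≤ rmin →
        (∑ i ∈ F, μ i w) * (ε₀/2) ≤ ∑ i ∈ F, μ i w * J' y (v i) := by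
      intro w y hy
      rw [Finset.sum_mul]
      refine Finset.sum_le_sum fun i hi => ?_
      rcases eq_or_lt_of_le (hμ0 i w) with heq | hpos
      · rw [← heq]; simp
      · have hdwi : dist w i < r i := hμpos i w hpos
        have hyi : dist y i < 2 * r i := by
          calc dist y i ≤ dist y w + dist w i := dist_triangle _ _ _
            _ < rmin + r i := by linarith
            _ ≤ 2 * r i := by linarith [hrminle i hi]
        exact mul_le_mul_of_nonneg_left (hball i (hFN i hi) y (Metric.mem_ball.2 hyi)).le
          (hμ0 i w)
    have happly : ∀ w y, J' y (V w) = (D w)⁻¹ * ∑ i ∈ F, μ i w * J' y (v i) := by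
      intro w y
      rw [hV]; simp only
      rw [map_smul, map_sum, smul_eq_mul]
      congr 1
      exact Finset.sum_congr rfl fun i _ => by rw [map_smul, smul_eq_mul]
    have hest0 : ∀ w y, dist y w ≤ rmin → 0 ≤ J' y (V w) := by
      intro w y hy
      rw [happly]
      have h1 := hsumle w y hy
      have h2 : 0 ≤ (∑ i ∈ F, μ i w) * (ε₀/2) := by
        have := hsum0 w; positivity
      have h3 : (0:ℝ) ≤ (D w)⁻¹ := inv_nonneg.2 (hDpos w).le
      nlinarith
    have hest1 : ∀ w y, w ∈ N → dist y w ≤ rmin → ε₀/2 ≤ J' y (V w) := by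
      intro w y hwN hy
      have hD_eq : D w = ∑ i ∈ F, μ i w := by
        rw [hD]; simp only
        rw [(hNclosed.mem_iff_infDist_zero hNne).1 hwN, zero_add]
      rw [happly]
      have h1 := hsumle w y hy
      have h3 : (0:ℝ) ≤ (D w)⁻¹ := inv_nonneg.2 (hDpos w).le
      calc ε₀/2 = (D w)⁻¹ * (D w * (ε₀/2)) := by
            rw [inv_mul_cancel_left₀ (hDpos w).ne']
        _ = (D w)⁻¹ * ((∑ i ∈ F, μ i w) * (ε₀/2)) := by rw [← hD_eq]
        _ ≤ (D w)⁻¹ * ∑ i ∈ F, μ i w * J' y (v i) := by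
            exact mul_le_mul_of_nonneg_left h1 h3
    -- cutoff function
    set χ : ℝ → ℝ := fun a => min 1 (max ((a - (c - ε₀/2)) / (ε₀/4)) 0) with hχ
    have hχcont : Continuous χ :=
      continuous_const.min (((continuous_id.sub continuous_const).div_const _).max
        continuous_const)
    have hχ0 : ∀ a, 0 ≤ χ a := fun a => le_min zero_le_one (le_max_right _ _)
    have hχ1 : ∀ a, χ a ≤ 1 := fun a => min_le_left _ _
    have hχzero : ∀ a, a ≤ c - ε₀/2 → χ a = 0 := by
      intro a ha
      have h1 : (a - (c - ε₀/2)) / (ε₀/4) ≤ 0 :=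
        div_nonpos_of_nonpos_of_nonneg (by linarith) (by positivity)
      rw [hχ]; simp only
      rw [max_eq_right h1, min_eq_right zero_le_one]
    have hχone : ∀ a, c - ε₀/4 ≤ a → χ a = 1 := by
      intro a ha
      have h1 : (1:ℝ) ≤ (a - (c - ε₀/2)) / (ε₀/4) := by
        rw [le_div_iff₀ (by positivity)]; linarith
      rw [hχ]; simp only
      rw [min_eq_left (le_trans h1 (le_max_left _ _))]
    have hχpos : ∀ a, 0 < χ a → c - ε₀/2 < a := by
      intro a hpos
      by_contra hle
      push_neg at hle
      rw [hχzero a hle] at hpos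
      exact lt_irrefl 0 hpos
    -- the deformation field along the path
    set W : unitInterval → E := fun t => χ (J (h t)) • V (h t) with hW
    have hWcont : Continuous W :=
      (hχcont.comp (hJc.comp h.continuous)).smul (hVcont.comp h.continuous)
    have hWnorm : ∀ t, ‖W t‖ ≤ 1 := by
      intro t
      rw [hW]; simp only
      rw [norm_smul, Real.norm_eq_abs, abs_of_nonneg (hχ0 _)]
      exact mul_le_one₀ (hχ1 _) (norm_nonneg _) (hVnorm _)
    set s : ℝ := min rmin (1/2) with hs
    have hs0 : 0 < s := lt_min hrmin0 (by norm_num)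
    have hsr : s ≤ rmin := min_le_left _ _
    have hs12 : s ≤ 1/2 := min_le_right _ _
    -- pointwise decrease along the deformation
    have hdec : ∀ t : unitInterval,
        J (h t - s • W t) ≤ J (h t) - s * (χ (J (h t)) * (ε₀/2)) := by
      intro t
      set a : E := h t with ha
      set Wt : E := W t with hWt
      have hWtval : Wt = χ (J a) • V a := rfl
      have hWtnorm : ‖Wt‖ ≤ 1 := hWnorm t
      have hbound : ∀ τ : ℝ, τ ∈ Set.Icc (0:ℝ) s →
          χ (J a) * (ε₀/2) ≤ J' (a - τ • Wt) Wt := by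
        intro τ hτ
        have hdist : dist (a - τ • Wt) a ≤ rmin := by
          rw [dist_eq_norm]
          have heq : a - τ • Wt - a = -(τ • Wt) := by abel
          rw [heq, norm_neg, norm_smul, Real.norm_eq_abs, abs_of_nonneg hτ.1]
          calc τ * ‖Wt‖ ≤ s * 1 := mul_le_mul hτ.2 hWtnorm (norm_nonneg _) hs0.le
            _ ≤ rmin := by rw [mul_one]; exact hsr
        rcases eq_or_lt_of_le (hχ0 (J a)) with heq | hpos
        · rw [hWtval, ← heq]; simp
        · have haN : a ∈ N := by
            rw [hN]
            refine ⟨⟨t, rfl⟩, ?_⟩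
            simp only [Set.mem_preimage, Set.mem_Ici]
            linarith [hχpos _ hpos]
          have hestval := hest1 a (a - τ • Wt) haN hdist
          calc χ (J a) * (ε₀/2) ≤ χ (J a) * J' (a - τ • Wt) (V a) :=
              mul_le_mul_of_nonneg_left hestval (hχ0 _)
            _ = J' (a - τ • Wt) (χ (J a) • V a) :=
              ((J' (a - τ • Wt)).map_smul (χ (J a)) (V a)).symm
            _ = J' (a - τ • Wt) Wt := by rw [← hWtval]
      have hcurve : ∀ τ : ℝ, HasDerivAt (fun τ : ℝ => a - τ • Wt) (-Wt) τ := by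
        intro τ
        have h1 : HasDerivAt (fun τ : ℝ => τ • Wt) Wt τ := by
          simpa using (hasDerivAt_id τ).smul_const Wt
        simpa using h1.const_sub a
      have hφd : ∀ τ : ℝ, HasDerivAt (fun τ : ℝ => J (a - τ • Wt))
          (-(J' (a - τ • Wt) Wt)) τ := by
        intro τ
        have := (hdiff (a - τ • Wt)).comp_hasDerivAt τ (hcurve τ)
        simpa [Function.comp_def] using this
      set ψ : ℝ → ℝ := fun τ => J (a - τ • Wt) + τ * (χ (J a) * (ε₀/2)) with hψ
      have hψd : ∀ τ : ℝ, HasDerivAt ψ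
          (-(J' (a - τ • Wt) Wt) + χ (J a) * (ε₀/2)) τ := fun τ =>
        (hφd τ).add (hasDerivAt_mul_const _)
      have hanti : AntitoneOn ψ (Set.Icc 0 s) := by
        apply antitoneOn_of_deriv_nonpos (convex_Icc 0 s)
        · exact Continuous.continuousOn
            (continuous_iff_continuousAt.2 fun τ => (hψd τ).continuousAt)
        · intro τ _
          exact ((hψd τ).differentiableAt).differentiableWithinAt
        · intro τ hτ
          rw [(hψd τ).deriv]
          have hτ' : τ ∈ Set.Icc (0:ℝ) s := by
            rw [interior_Icc] at hτ
            exact Set.mem_Icc_of_Ioo hτ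
          linarith [hbound τ hτ']
      have h0mem : (0:ℝ) ∈ Set.Icc (0:ℝ) s := ⟨le_refl _, hs0.le⟩
      have hsmem : s ∈ Set.Icc (0:ℝ) s := ⟨hs0.le, le_refl _⟩
      have hψs := hanti h0mem hsmem hs0.le
      have hψ0 : ψ 0 = J a := by rw [hψ]; simp
      have hψs' : ψ s = J (a - s • Wt) + s * (χ (J a) * (ε₀/2)) := rfl
      rw [hψ0, hψs'] at hψs
      linarith
    -- the deformed path
    set g : C(unitInterval, E) :=
      ⟨fun t => h t - s • W t, h.continuous.sub (continuous_const.smul hWcont)⟩ with hg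
    have hχJ0 : χ (J (0:E)) = 0 := by rw [hJ0]; exact hχzero 0 (by linarith)
    have hχJe : χ (J e) = 0 := by rw [hJe]; exact hχzero 0 (by linarith)
    have hH0 : h 0 = 0 := H.2.1
    have hH1' : h 1 = e := H.2.2
    have hg0 : g 0 = 0 := by
      show h 0 - s • W 0 = 0
      rw [hW]; simp only
      rw [hH0, hχJ0]
      simp
    have hg1 : g 1 = e := by
      show h 1 - s • W 1 = e
      rw [hW]; simp only
      rw [hH1', hχJe]
      simp
    have hgΓ : g ∈ Γ := ⟨hg0, hg1⟩
    -- decrease of the max value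
    have hΦg : Φ ⟨g, hgΓ⟩ ≤ Φ H - s * (ε₀/2) := by
      refine ciSup_le fun t => ?_
      have hgt : ((⟨g, hgΓ⟩ : Γ) : C(unitInterval, E)) t = h t - s • W t := rfl
      rw [hgt]
      rcases le_or_gt (c - ε₀/4) (J (h t)) with hcase | hcase
      · have hone := hχone _ hcase
        have hd := hdec t
        rw [hone] at hd
        have hJle := hΦub H t
        have : J (h t) ≤ Φ H := hJle
        linarith [hd]
      · have hd := hdec t
        have hnn : 0 ≤ s * (χ (J (h t)) * (ε₀/2)) := by
          have := hχ0 (J (h t)); positivity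
        have hle2 : J (h t - s • W t) ≤ J (h t) := by linarith
        have hs2 : s * (ε₀/2) ≤ ε₀/4 := by nlinarith
        linarith [hcΦH]
    -- Ekeland contradiction
    have hdistHg : dist H (⟨g, hgΓ⟩ : Γ) ≤ s := by
      rw [Subtype.dist_eq]
      rw [ContinuousMap.dist_le hs0.le]
      intro t
      have heq : dist (h t) (g t) = ‖s • W t‖ := by
        rw [dist_eq_norm]
        congr 1
        show h t - (h t - s • W t) = s • W t
        abel
      rw [heq, norm_smul, Real.norm_eq_abs, abs_of_nonneg hs0.le]
      exact mul_le_of_le_one_right hs0.le (hWnorm t)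
    have hek := hH2 ⟨g, hgΓ⟩
    have hmul : ε₀/4 * dist H (⟨g, hgΓ⟩ : Γ) ≤ ε₀/4 * s :=
      mul_le_mul_of_nonneg_left hdistHg (by positivity)
    nlinarith [hs0, hε₀]
  -- conclusion via Palais-Smale
  refine ⟨hσc, ?_⟩
  have hsel : ∀ k : ℕ, ∃ u : E, |J u - c| ≤ 1/(k+1) ∧ ‖J' u‖ ≤ 1/(k+1) := fun k =>
    hkey _ (by positivity)
  choose u hu1 hu2 using hsel
  have hinv : Tendsto (fun k : ℕ => 1/((k:ℝ)+1)) atTop (nhds 0) :=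
    tendsto_one_div_add_atTop_nhds_zero_nat
  obtain ⟨φ, hφ, x, hx⟩ := hPS u
    ⟨|c| + 1, fun k => by
      have h1k : 1/((k:ℝ)+1) ≤ 1 := by
        rw [div_le_one (by positivity)]; simp
      calc |J (u k)| ≤ |J (u k) - c| + |c| := by
              have := abs_sub_abs_le_abs_sub (J (u k)) c; linarith [abs_abs (J (u k))]
        _ ≤ |c| + 1 := by linarith [hu1 k]⟩
    (squeeze_zero_norm hu2 hinv)
  have hφk : ∀ k : ℕ, (k:ℝ) ≤ (φ k : ℝ) := fun k => Nat.cast_le.2 (hφ.le_apply)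
  have hJux : Tendsto (fun k => J (u (φ k))) atTop (nhds (J x)) :=
    (hJc.tendsto x).comp hx
  have hJuc : Tendsto (fun k => J (u (φ k))) atTop (nhds c) := by
    have : Tendsto (fun k => J (u (φ k)) - c) atTop (nhds 0) := by
      refine squeeze_zero_norm (fun k => ?_) hinv
      calc ‖J (u (φ k)) - c‖ = |J (u (φ k)) - c| := rfl
        _ ≤ 1/((φ k : ℝ)+1) := hu1 _
        _ ≤ 1/((k:ℝ)+1) := by
            apply one_div_le_one_div_of_le (by positivity); linarith [hφk k]
    have := this.add (tendsto_const_nhds (x := c))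
    simpa using this
  have hJx : J x = c := tendsto_nhds_unique hJux hJuc
  have hJ'x : J' x = 0 := by
    have h1 : Tendsto (fun k => J' (u (φ k))) atTop (nhds (J' x)) :=
      (hcont.tendsto x).comp hx
    have h2 : Tendsto (fun k => J' (u (φ k))) atTop (nhds 0) :=
      (squeeze_zero_norm hu2 hinv).comp hφ.tendsto_atTop
    exact tendsto_nhds_unique h1 h2
  exact ⟨x, hJx, hJ'x⟩
end

section
/- Let E be a uniformly convex real Banach space, let p > 1 and r > 0, and let A : E → E* be a map satisfying ⟨A(u), v⟩ ≤ r ‖u‖^{p−1} ‖v‖ for all u, v ∈ E and ⟨A(u), u⟩ = r ‖u‖^p for all u ∈ E. Then A satisfies the (S)-property: whenever (u_n) is a sequence in E converging weakly to u ∈ E and ⟨A(u_n), u_n − u⟩ → 0, it follows that u_n → u strongly in E. -/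
open Filter

private lemma rpow_split {t p : ℝ} (ht : 0 ≤ t) (hp : 1 < p) :
    t ^ p = t ^ (p - 1) * t := by
  rcases eq_or_lt_of_le ht with h | h
  · rw [← h, Real.zero_rpow (by linarith), Real.zero_rpow (by linarith), zero_mul]
  · rw [Real.rpow_sub h, Real.rpow_one, div_mul_cancel₀ _ (ne_of_gt h)]

/-- The (S)-property for an operator in a uniformly convex Banach space. -/
theorem s_property_of_uniformly_convex
    {E : Type*} [NormedAddCommGroup E] [NormedSpace ℝ E] [CompleteSpace E]
    [UniformConvexSpace E]
    (p r : ℝ) (hp : 1 < p) (hr : 0 < r)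
    (A : E → E →L[ℝ] ℝ)
    (hA1 : ∀ u v : E, A u v ≤ r * ‖u‖ ^ (p - 1) * ‖v‖)
    (hA2 : ∀ u : E, A u u = r * ‖u‖ ^ p)
    (u : ℕ → E) (x : E)
    (hweak : ∀ φ : E →L[ℝ] ℝ, Tendsto (fun k => φ (u k)) atTop (nhds (φ x)))
    (hlim : Tendsto (fun k => A (u k) (u k - x)) atTop (nhds 0)) :
    Tendsto u atTop (nhds x) := by
  -- Key pointwise lower bound on the pairing
  have hkey : ∀ n, r * ‖u n‖ ^ (p - 1) * (‖u n‖ - ‖x‖) ≤ A (u n) (u n - x) := by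
    intro n
    have h1 : A (u n) (u n - x) = r * ‖u n‖ ^ p - A (u n) x := by
      rw [map_sub, hA2]
    have h2 : A (u n) x ≤ r * ‖u n‖ ^ (p - 1) * ‖x‖ := hA1 (u n) x
    have h3 : r * ‖u n‖ ^ p = r * ‖u n‖ ^ (p - 1) * ‖u n‖ := by
      rw [rpow_split (norm_nonneg _) hp, mul_assoc]
    rw [h1, h3]
    nlinarith
  -- Step 1 : norms converge
  rcases eq_or_ne x 0 with rfl | hx0
  · -- case x = 0
    rw [tendsto_zero_iff_norm_tendsto_zero]
    rw [tendsto_order]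
    constructor
    · intro b hb
      exact Eventually.of_forall fun n => lt_of_lt_of_le hb (norm_nonneg _)
    · intro b hb
      have hc : (0 : ℝ) < r * b ^ p := by
        positivity
      have := hlim.eventually (eventually_lt_nhds hc)
      filter_upwards [this] with n hn
      have hAn : A (u n) (u n - 0) = r * ‖u n‖ ^ p := by
        rw [sub_zero, hA2]
      rw [hAn] at hn
      have hlt : ‖u n‖ ^ p < b ^ p := by
        have := (mul_lt_mul_iff_right₀ hr).1 hn
        linarith
      exact (Real.rpow_lt_rpow_iff (norm_nonneg _) hb.le (by linarith)).1 hlt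
  -- case x ≠ 0
  obtain ⟨φ, hφ1, hφ2⟩ := exists_dual_vector ℝ x (norm_ne_zero_iff.2 hx0)
  have hφx : φ x = ‖x‖ := by exact_mod_cast hφ2
  have hφle : ∀ z : E, φ z ≤ ‖z‖ := by
    intro z
    calc φ z ≤ ‖φ z‖ := le_abs_self _
    _ ≤ ‖φ‖ * ‖z‖ := φ.le_opNorm z
    _ = ‖z‖ := by rw [hφ1, one_mul]
  have hφu := hweak φ
  rw [hφx] at hφu
  have hxpos : (0 : ℝ) < ‖x‖ := norm_pos_iff.2 hx0
  -- norms converge to ‖x‖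
  have hnorm : Tendsto (fun n => ‖u n‖) atTop (nhds ‖x‖) := by
    rw [tendsto_order]
    constructor
    · intro b hb
      filter_upwards [hφu.eventually (eventually_gt_nhds hb)] with n hn
      exact lt_of_lt_of_le hn (hφle (u n))
    · intro b hb
      set ε := b - ‖x‖ with hε
      have hεpos : 0 < ε := by simp [hε]; linarith
      have hbpos : 0 < b := lt_of_le_of_lt (norm_nonneg x) hb
      have hc : (0 : ℝ) < r * b ^ (p - 1) * ε := by positivity
      filter_upwards [hlim.eventually (eventually_lt_nhds hc)] with n hn
      by_contra hcon
      push_neg at hcon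
      have h1 : b ^ (p - 1) ≤ ‖u n‖ ^ (p - 1) :=
        Real.rpow_le_rpow hbpos.le hcon (by linarith)
      have h2 : ε ≤ ‖u n‖ - ‖x‖ := by
        simp only [hε]; linarith
      have h3 : r * b ^ (p - 1) * ε ≤ r * ‖u n‖ ^ (p - 1) * (‖u n‖ - ‖x‖) := by
        have hb1 : (0:ℝ) ≤ b ^ (p-1) := by positivity
        have h4 : b ^ (p-1) * ε ≤ ‖u n‖ ^ (p-1) * (‖u n‖ - ‖x‖) :=
          mul_le_mul h1 h2 hεpos.le (hb1.trans h1)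
        nlinarith [h4]
      linarith [hkey n, hn]
  -- Step 2: Radon–Riesz argument via uniform convexity
  rw [NormedAddCommGroup.tendsto_atTop]
  intro ε hε
  obtain ⟨δ, hδpos, hδ⟩ :=
    exists_forall_closed_ball_dist_add_le_two_mul_sub E (half_pos hε) ‖x‖
  -- the rescaled sequence
  set M : ℕ → ℝ := fun n => max ‖u n‖ ‖x‖ with hM
  have hMpos : ∀ n, 0 < M n := fun n => lt_max_of_lt_right hxpos
  set a : ℕ → E := fun n => (‖x‖ / M n) • u n with ha
  have hanorm : ∀ n, ‖a n‖ ≤ ‖x‖ := by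
    intro n
    rw [ha]
    simp only [norm_smul, Real.norm_eq_abs]
    rw [abs_of_nonneg (by positivity)]
    rw [div_mul_eq_mul_div, div_le_iff₀ (hMpos n)]
    have : ‖u n‖ ≤ M n := le_max_left _ _
    nlinarith [norm_nonneg x]
  have hMlim : Tendsto M atTop (nhds ‖x‖) := by
    have := hnorm.max (tendsto_const_nhds (x := ‖x‖))
    simpa using this
  have hdiff : Tendsto (fun n => ‖a n - u n‖) atTop (nhds 0) := by
    have heq : ∀ n, ‖a n - u n‖ = |‖x‖ / M n - 1| * ‖u n‖ := by
      intro n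
      rw [ha]
      have h5 : (‖x‖ / M n) • u n - u n = (‖x‖ / M n - 1) • u n := by
        rw [sub_smul, one_smul]
      simp only [h5, norm_smul, Real.norm_eq_abs]
    simp only [heq]
    have h1 : Tendsto (fun n => |‖x‖ / M n - 1|) atTop (nhds 0) := by
      have : Tendsto (fun n => ‖x‖ / M n - 1) atTop (nhds (‖x‖ / ‖x‖ - 1)) :=
        (tendsto_const_nhds.div hMlim (ne_of_gt hxpos)).sub tendsto_const_nhds
      rw [div_self (ne_of_gt hxpos), sub_self] at this
      simpa using this.abs
    have := h1.mul hnorm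
    simpa using this
  -- eventual facts
  have hev1 : ∀ᶠ n in atTop, ‖a n - u n‖ < min (ε / 2) (δ / 2) := by
    exact hdiff.eventually (eventually_lt_nhds (lt_min (half_pos hε) (half_pos hδpos)))
  have hev2 : ∀ᶠ n in atTop, 2 * ‖x‖ - δ / 2 < ‖u n + x‖ := by
    have h2 : Tendsto (fun n => φ (u n) + ‖x‖) atTop (nhds (‖x‖ + ‖x‖)) :=
      hφu.add tendsto_const_nhds
    have hlt : 2 * ‖x‖ - δ / 2 < ‖x‖ + ‖x‖ := by linarith
    filter_upwards [h2.eventually (eventually_gt_nhds hlt)] with n hn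
    have : φ (u n) + ‖x‖ = φ (u n + x) := by rw [map_add, hφx]
    calc 2 * ‖x‖ - δ / 2 < φ (u n) + ‖x‖ := hn
    _ = φ (u n + x) := this
    _ ≤ ‖u n + x‖ := hφle _
  rw [eventually_atTop] at hev1 hev2
  obtain ⟨N1, hN1⟩ := hev1
  obtain ⟨N2, hN2⟩ := hev2
  refine ⟨max N1 N2, fun n hn => ?_⟩
  have hn1 := hN1 n (le_trans (le_max_left _ _) hn)
  have hn2 := hN2 n (le_trans (le_max_right _ _) hn)
  by_contra hcon
  push_neg at hcon
  have hax : ε / 2 ≤ ‖a n - x‖ := by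
    have : ‖u n - x‖ ≤ ‖a n - u n‖ + ‖a n - x‖ := by
      have := norm_sub_le_norm_sub_add_norm_sub (u n) (a n) x
      rw [norm_sub_rev (u n) (a n)] at this
      linarith
    have h := lt_min_iff.1 hn1
    linarith
  have huc := hδ (hanorm n) (le_refl ‖x‖) hax
  have : ‖u n + x‖ ≤ ‖a n + x‖ + ‖a n - u n‖ := by
    have h := norm_add_le (a n + x) (u n - a n)
    have heq : a n + x + (u n - a n) = u n + x := by abel
    rw [heq] at h
    rw [norm_sub_rev (u n) (a n)] at h
    linarith
  have h := lt_min_iff.1 hn1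
  linarith
end
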